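/- The mean of the Borel distribution with parameter μ ∈ (0,1) equals 1/(1-μ), i.e., ∑_{n≥1} n · e^{-μn} (μn)^{n-1}/n! = 1/(1-μ). -/

import Mathlib

/-!
With `x = μ e^{-μ}` and `U(x) = ∑ nⁿ/n! xⁿ`, the mean is `(U(x) - 1)/μ`, so it suffices that
`U(μ e^{-μ}) = 1/(1-μ)`. For small `μ`, expanding `e^{-nμ}` gives an absolutely convergent double
series whose antidiagonal `n + j = N` sums to `μ^N/N! · ∑ₖ (-1)^{N-k} C(N,k) k^N = μ^N`, the inner
sum being the `N`-th forward difference of `k ↦ k^N`. Both sides are analytic in `μ` on `(0,1)`,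
because `μ e^{-μ} < 1/e` there and `1/e` is within the radius of `U`, so the identity propagates.
-/

open Finset Real Filter Topology
open scoped Nat

theorem sum_range_neg_one_pow_mul_choose_mul_pow_self {R : Type*} [CommRing R] (N : ℕ) :
    ∑ k ∈ range (N + 1), (-1 : R) ^ (N - k) * N.choose k * (k : R) ^ N = N ! := by
  have h := congr_fun (fwdDiff_iter_eq_factorial (R := R) (n := N)) 0
  rw [fwdDiff_iter_eq_sum_shift] at h
  simpa [zsmul_eq_mul] using h

theorem Summable.tsum_eq_tsum_sum_antidiagonal {α : Type*} [AddCommMonoid α] [TopologicalSpace α]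
    [ContinuousAdd α] [T3Space α] {f : ℕ × ℕ → α} (hf : Summable f) :
    ∑' p, f p = ∑' n, ∑ p ∈ antidiagonal n, f p := by
  let e := HasAntidiagonal.sigmaAntidiagonalEquivProd (A := ℕ)
  have hfe : Summable fun c ↦ f (e c) := e.summable_iff.mpr hf
  rw [← e.tsum_eq, hfe.tsum_sigma' fun _ ↦ (hasSum_fintype _).summable]
  simp [e, tsum_fintype, sum_attach (antidiagonal _) f]

namespace Real

theorem hasSum_pow_div_factorial (x : ℝ) : HasSum (fun n ↦ x ^ n / n !) (exp x) := by
  rw [exp_eq_exp_ℝ]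
  exact NormedSpace.expSeries_div_hasSum_exp x

theorem mul_exp_neg_lt_exp_neg_one {μ : ℝ} (hμ : μ ≠ 1) : μ * exp (-μ) < exp (-1) := by
  have h := add_one_lt_exp (sub_ne_zero.mpr hμ)
  rw [sub_add_cancel] at h
  calc μ * exp (-μ) < exp (μ - 1) * exp (-μ) := by gcongr
    _ = exp (-1) := by rw [← exp_add]; ring_nf

end Real

namespace Borel

noncomputable def selfPowCoeff (n : ℕ) : ℝ := (n : ℝ) ^ n / n !

lemma selfPowCoeff_zero : selfPowCoeff 0 = 1 := by
  simp [selfPowCoeff]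

lemma selfPowCoeff_nonneg (n : ℕ) : 0 ≤ selfPowCoeff n := by
  unfold selfPowCoeff; positivity

lemma selfPowCoeff_le_exp_one_pow (n : ℕ) : selfPowCoeff n ≤ exp 1 ^ n := by
  rw [← exp_nat_mul, mul_one]
  exact pow_div_factorial_le_exp _ n.cast_nonneg n

lemma selfPowCoeff_mul_pow_le {x : ℝ} (hx : 0 ≤ x) (n : ℕ) :
    selfPowCoeff n * x ^ n ≤ (exp 1 * x) ^ n := by
  rw [mul_pow]
  exact mul_le_mul_of_nonneg_right (selfPowCoeff_le_exp_one_pow n) (pow_nonneg hx n)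

lemma summable_selfPowCoeff_mul_pow {x : ℝ} (hx₀ : 0 ≤ x) (hx : x < exp (-1)) :
    Summable fun n ↦ selfPowCoeff n * x ^ n := by
  have hex : exp 1 * x < 1 := by
    rwa [← lt_div_iff₀' (exp_pos 1), one_div, ← exp_neg]
  exact .of_nonneg_of_le (fun n ↦ mul_nonneg (selfPowCoeff_nonneg n) (pow_nonneg hx₀ n))
    (selfPowCoeff_mul_pow_le hx₀) (summable_geometric_of_lt_one (by positivity) hex)

noncomputable def selfPowSeries : FormalMultilinearSeries ℝ ℝ ℝ :=
  FormalMultilinearSeries.ofScalars ℝ selfPowCoeff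

lemma selfPowSeries_sum_eq (x : ℝ) : selfPowSeries.sum x = ∑' n, selfPowCoeff n * x ^ n :=
  FormalMultilinearSeries.ofScalars_sum_eq selfPowCoeff x

lemma ofReal_exp_neg_one_le_radius_selfPowSeries :
    ENNReal.ofReal (exp (-1)) ≤ selfPowSeries.radius := by
  refine selfPowSeries.le_radius_of_bound 1 fun n ↦ ?_
  rw [selfPowSeries, FormalMultilinearSeries.ofScalars_norm,
    Real.norm_of_nonneg (selfPowCoeff_nonneg n), Real.coe_toNNReal _ (exp_pos _).le]
  calc selfPowCoeff n * exp (-1) ^ n ≤ (exp 1 * exp (-1)) ^ n :=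
        selfPowCoeff_mul_pow_le (exp_pos _).le n
    _ = 1 := by rw [← exp_add, add_neg_cancel, exp_zero, one_pow]

lemma analyticAt_selfPowSeries_sum {x : ℝ} (hx : |x| < exp (-1)) :
    AnalyticAt ℝ selfPowSeries.sum x := by
  refine selfPowSeries.analyticOnNhd x ?_
  rw [Metric.mem_eball, edist_dist, dist_zero_right, Real.norm_eq_abs]
  exact ((ENNReal.ofReal_lt_ofReal_iff (exp_pos _)).mpr hx).trans_le
    ofReal_exp_neg_one_le_radius_selfPowSeries

noncomputable def selfPowExpTerm (μ : ℝ) (p : ℕ × ℕ) : ℝ :=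
  selfPowCoeff p.1 * μ ^ p.1 * ((-(p.1 * μ)) ^ p.2 / p.2 !)

lemma hasSum_selfPowExpTerm_fiber (μ : ℝ) (n : ℕ) :
    HasSum (fun j ↦ selfPowExpTerm μ (n, j)) (selfPowCoeff n * (μ * exp (-μ)) ^ n) := by
  rw [mul_pow, ← exp_nat_mul, mul_neg, ← mul_assoc]
  exact (hasSum_pow_div_factorial (-(n * μ))).mul_left _

lemma abs_selfPowExpTerm {μ : ℝ} (hμ : 0 ≤ μ) (p : ℕ × ℕ) :
    |selfPowExpTerm μ p| = selfPowCoeff p.1 * μ ^ p.1 * ((p.1 * μ) ^ p.2 / p.2 !) := by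
  simp only [selfPowExpTerm, abs_mul, abs_div, abs_pow, abs_neg, Nat.abs_cast,
    abs_of_nonneg (selfPowCoeff_nonneg _), abs_of_nonneg hμ]

lemma summable_selfPowExpTerm {μ : ℝ} (hμ₀ : 0 ≤ μ) (hμ : μ * exp (μ + 1) < 1) :
    Summable (selfPowExpTerm μ) := by
  have hfiber (n : ℕ) : HasSum (fun j ↦ |selfPowExpTerm μ (n, j)|)
      (selfPowCoeff n * (μ * exp μ) ^ n) := by
    simp_rw [abs_selfPowExpTerm hμ₀]
    rw [mul_pow, ← exp_nat_mul, ← mul_assoc]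
    exact (hasSum_pow_div_factorial (n * μ)).mul_left _
  have hratio : exp 1 * (μ * exp μ) < 1 := by
    rwa [mul_left_comm, ← exp_add, add_comm]
  refine summable_abs_iff.mp ((summable_prod_of_nonneg fun _ ↦ abs_nonneg _).mpr
    ⟨fun n ↦ (hfiber n).summable, ?_⟩)
  simp_rw [fun n ↦ (hfiber n).tsum_eq]
  exact .of_nonneg_of_le (fun n ↦ by have := selfPowCoeff_nonneg n; positivity)
    (selfPowCoeff_mul_pow_le (by positivity)) (summable_geometric_of_lt_one (by positivity) hratio)

lemma sum_antidiagonal_selfPowExpTerm (μ : ℝ) (N : ℕ) :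
    ∑ p ∈ antidiagonal N, selfPowExpTerm μ p = μ ^ N := by
  rw [Nat.sum_antidiagonal_eq_sum_range_succ_mk]
  have hterm (k : ℕ) (hk : k ∈ range (N + 1)) : selfPowExpTerm μ (k, N - k)
      = μ ^ N / N ! * ((-1) ^ (N - k) * N.choose k * (k : ℝ) ^ N) := by
    have hkN : k ≤ N := Nat.lt_succ_iff.mp (mem_range.mp hk)
    rw [selfPowExpTerm, selfPowCoeff, Nat.cast_choose ℝ hkN]
    obtain ⟨m, rfl⟩ := Nat.exists_eq_add_of_le hkN
    rw [Nat.add_sub_cancel_left]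
    field_simp
    ring
  rw [sum_congr rfl hterm, ← mul_sum, sum_range_neg_one_pow_mul_choose_mul_pow_self]
  field_simp

lemma tsum_selfPowCoeff_mul_pow_of_small {μ : ℝ} (hμ₀ : 0 ≤ μ) (hμ : μ * exp (μ + 1) < 1) :
    ∑' n, selfPowCoeff n * (μ * exp (-μ)) ^ n = (1 - μ)⁻¹ := by
  have hsum := summable_selfPowExpTerm hμ₀ hμ
  have hμ₁ : μ < 1 := (le_mul_of_one_le_right hμ₀ (one_le_exp (by linarith))).trans_lt hμ
  calc ∑' n, selfPowCoeff n * (μ * exp (-μ)) ^ n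
      = ∑' p, selfPowExpTerm μ p :=
        (hsum.hasSum.prod_fiberwise (hasSum_selfPowExpTerm_fiber μ)).tsum_eq
    _ = ∑' N, μ ^ N := by
        simp_rw [hsum.tsum_eq_tsum_sum_antidiagonal, sum_antidiagonal_selfPowExpTerm]
    _ = (1 - μ)⁻¹ := tsum_geometric_of_lt_one hμ₀ hμ₁

lemma selfPowSeries_sum_mul_exp_neg {μ : ℝ} (hμ : μ ∈ Set.Ioo 0 1) :
    selfPowSeries.sum (μ * exp (-μ)) = (1 - μ)⁻¹ := by
  have hf : AnalyticOnNhd ℝ (fun t ↦ selfPowSeries.sum (t * exp (-t))) (Set.Ioo (0 : ℝ) 1) :=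
    fun t ht ↦ (analyticAt_selfPowSeries_sum (by
      rw [abs_of_pos (mul_pos ht.1 (exp_pos _))]
      exact mul_exp_neg_lt_exp_neg_one ht.2.ne)).comp
        (analyticAt_id.mul analyticAt_id.neg.rexp)
  have hg : AnalyticOnNhd ℝ (fun t ↦ (1 - t)⁻¹) (Set.Ioo (0 : ℝ) 1) := fun t ht ↦
    (analyticAt_const.sub analyticAt_id).inv (sub_ne_zero.mpr ht.2.ne')
  have hε : exp (-2) < 1 := exp_lt_one_iff.mpr (by norm_num)
  have hsmall : Set.EqOn (fun t ↦ selfPowSeries.sum (t * exp (-t))) (fun t ↦ (1 - t)⁻¹)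
      (Set.Ioo 0 (exp (-2))) := by
    intro t ht
    refine (selfPowSeries_sum_eq _).trans (tsum_selfPowCoeff_mul_pow_of_small ht.1.le ?_)
    calc t * exp (t + 1) < exp (-2) * exp 2 :=
          mul_lt_mul'' ht.2 (exp_lt_exp.mpr (by linarith [ht.2])) ht.1.le (exp_pos _).le
      _ = 1 := by rw [← exp_add, neg_add_cancel, exp_zero]
  have hz₀ : exp (-2) / 2 ∈ Set.Ioo 0 (exp (-2)) := ⟨by positivity, by linarith [exp_pos (-2)]⟩
  exact hf.eqOn_of_preconnected_of_eventuallyEq hg isPreconnected_Ioo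
    ⟨hz₀.1, hz₀.2.trans hε⟩ (hsmall.eventuallyEq_of_mem (Ioo_mem_nhds hz₀.1 hz₀.2)) hμ

lemma hasSum_selfPowCoeff_mul_pow_mul_exp_neg {μ : ℝ} (hμ : μ ∈ Set.Ioo 0 1) :
    HasSum (fun n ↦ selfPowCoeff n * (μ * exp (-μ)) ^ n) (1 - μ)⁻¹ := by
  have hx := mul_exp_neg_lt_exp_neg_one hμ.2.ne
  refine (summable_selfPowCoeff_mul_pow (mul_pos hμ.1 (exp_pos _)).le hx).hasSum_iff.mpr ?_
  rw [← selfPowSeries_sum_eq, selfPowSeries_sum_mul_exp_neg hμ]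

lemma mean_term_eq {μ : ℝ} (hμ : μ ≠ 0) (m : ℕ) :
    ((m : ℝ) + 1) * (exp (-(μ * ((m : ℝ) + 1))) * (μ * ((m : ℝ) + 1)) ^ m / ((m + 1)! : ℝ))
      = μ⁻¹ * (selfPowCoeff (m + 1) * (μ * exp (-μ)) ^ (m + 1)) := by
  rw [selfPowCoeff, mul_pow, mul_pow, ← exp_nat_mul,
    show ((m + 1 : ℕ) : ℝ) * -μ = -(μ * (m + 1)) by push_cast; ring]
  push_cast
  field_simp
  ring

end Borel

open Borel in
/-- The mean of the Borel distribution with parameter `μ ∈ (0,1)` equals `1/(1-μ)`: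
`∑_{n ≥ 1} n · e^{-μn} (μn)^{n-1}/n! = 1/(1-μ)`
(the index `n ≥ 1` is written as `n = m + 1` with `m : ℕ`). -/
theorem borel_mean (μ : ℝ) (hμ : μ ∈ Set.Ioo (0:ℝ) 1) :
    ∑' m : ℕ, ((m:ℝ) + 1) *
      (Real.exp (-(μ * ((m:ℝ) + 1))) * (μ * ((m:ℝ) + 1)) ^ m /
        ((m + 1).factorial : ℝ)) = 1 / (1 - μ) := by
  have htail := (hasSum_nat_add_iff' 1).mpr (hasSum_selfPowCoeff_mul_pow_mul_exp_neg hμ)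
  simp_rw [mean_term_eq hμ.1.ne']
  rw [(htail.mul_left μ⁻¹).tsum_eq, sum_range_one, selfPowCoeff_zero, pow_zero, mul_one]
  have hμ₀ : μ ≠ 0 := hμ.1.ne'
  have hμ₁ : 1 - μ ≠ 0 := sub_ne_zero.mpr hμ.2.ne'
  field_simp
  ring
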